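/- arXiv:1706.04087 — 5 statements merged into one kernel-verified Lean document; each statement's English description precedes it below -/
import Mathlib

section
/- Consider the discrete-time linear system X(i+1) = (T·A + I)·X(i) + T·B·U(i) with T > 0, B invertible, and the first order DSMC input U(i) = B⁻¹·((1/T)·((P − I)·X(i) − P·X_d(i) + X_d(i+1)) − A·X(i)), where P is a diagonal matrix with diagonal entries ρ_1, …, ρ_n all lying in the open interval (0, 1). Then each component of the sliding surface S(i) = X(i) − X_d(i) satisfies the reaching law |s_p(i+1)| ≤ ρ_p·|s_p(i)|, the closed form s_p(i) = ρ_p^i · s_p(0) holds for every i, and s_p(i) → 0 as i → ∞ for every p. -/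
open Matrix

section ClosedLoop

variable {ι 𝕜 : Type*} [Fintype ι] [DecidableEq ι] [Field 𝕜]

/-- The control law inverts the plant (`B * B⁻¹ = 1`, `T • (1 / T) • w = w`), so the tracking
error is driven by `P` alone. -/
theorem dsmc_tracking_error_succ {T : 𝕜} (hT : T ≠ 0) {A B P : Matrix ι ι 𝕜} (hB : IsUnit B)
    {x x' xd xd' u : ι → 𝕜}
    (hsys : x' = (T • A + 1) *ᵥ x + T • (B *ᵥ u))
    (hu : u = B⁻¹ *ᵥ ((1 / T) • ((P - 1) *ᵥ x - P *ᵥ xd + xd') - A *ᵥ x)) :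
    x' - xd' = P *ᵥ (x - xd) := by
  have hBu : B *ᵥ u = (1 / T) • ((P - 1) *ᵥ x - P *ᵥ xd + xd') - A *ᵥ x := by
    rw [hu, mulVec_mulVec, mul_nonsing_inv _ ((isUnit_iff_isUnit_det B).mp hB), one_mulVec]
  rw [hsys, hBu, smul_sub, smul_smul, mul_one_div_cancel hT, one_smul, add_mulVec, smul_mulVec,
    one_mulVec, sub_mulVec, one_mulVec, mulVec_sub]
  abel

end ClosedLoop

theorem eq_pow_mul_of_forall_succ_eq_mul {M : Type*} [Monoid M] {s : ℕ → M} {r : M}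
    (h : ∀ i, s (i + 1) = r * s i) (i : ℕ) : s i = r ^ i * s 0 := by
  induction i with
  | zero => rw [pow_zero, one_mul]
  | succ k ih => rw [h, ih, pow_succ', mul_assoc]

/-- For the discrete-time linear system with the SISO first order
DSMC law whose gain matrix `P = diag(ρ₁, …, ρₙ)` has `0 < ρ_p < 1`, each
component of the sliding surface `S(i) = X(i) − X_d(i)` satisfies the reaching
law `|s_p(i+1)| ≤ ρ_p·|s_p(i)|`, the closed form `s_p(i) = ρ_p^i · s_p(0)`,
and `s_p(i) → 0` as `i → ∞`. -/
theorem siso_first_order_dsmc_reaching_law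
    {n : ℕ} (T : ℝ) (hT : 0 < T)
    (A B : Matrix (Fin n) (Fin n) ℝ) (hB : IsUnit B)
    (ρ : Fin n → ℝ) (hρ : ∀ p, 0 < ρ p ∧ ρ p < 1)
    (P : Matrix (Fin n) (Fin n) ℝ) (hP : P = Matrix.diagonal ρ)
    (X Xd U S : ℕ → Fin n → ℝ)
    (hsys : ∀ i, X (i + 1) =
      (T • A + 1).mulVec (X i) + T • B.mulVec (U i))
    (hU : ∀ i, U i = B⁻¹.mulVec
      ((1 / T) • ((P - 1).mulVec (X i) - P.mulVec (Xd i) + Xd (i + 1))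
        - A.mulVec (X i)))
    (hS : ∀ i, S i = X i - Xd i) :
    (∀ p, ∀ i, |S (i + 1) p| ≤ ρ p * |S i p|) ∧
    (∀ p, ∀ i, S i p = (ρ p) ^ i * S 0 p) ∧
    (∀ p, Filter.Tendsto (fun i => S i p) Filter.atTop (nhds 0)) := by
  have hstep : ∀ i, S (i + 1) = P *ᵥ S i := fun i => by
    rw [hS, hS]
    exact dsmc_tracking_error_succ hT.ne' hB (hsys i) (hU i)
  have hcomp : ∀ p i, S (i + 1) p = ρ p * S i p := fun p i => by
    rw [hstep, hP, mulVec_diagonal]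
  have hclosed : ∀ p i, S i p = ρ p ^ i * S 0 p := fun p =>
    eq_pow_mul_of_forall_succ_eq_mul (s := fun i => S i p) (hcomp p)
  refine ⟨fun p i => ?_, hclosed, fun p => ?_⟩
  · rw [hcomp, abs_mul, abs_of_pos (hρ p).1]
  · have hpow := (tendsto_pow_atTop_nhds_zero_of_lt_one (hρ p).1.le (hρ p).2).mul_const (S 0 p)
    rw [zero_mul] at hpow
    exact hpow.congr fun i => (hclosed p i).symm
end

section
/- Let T > 0, a ∈ ℝ, ρ ∈ ℝ, ρ_β > 0, ρ_α > 0, and let β, α ∈ ℝ be unknown constants. Suppose the scalar sliding surface satisfies s(i+1) = ρ·s(i) + T·(β̃(i)·a + α̃(i))·x(i), where β̃(i) = β − β̂(i) and α̃(i) = α − α̂(i), and the estimates are updated by the adaptation laws β̂(i+1) = β̂(i) + T·s(i)·a·x(i)/ρ_β and α̂(i+1) = α̂(i) + T·s(i)·x(i)/ρ_α. Then the following exact identity holds for every i: s(i)·(s(i+1) − s(i)) + ρ_β·β̃(i)·(β̃(i+1) − β̃(i)) + ρ_α·α̃(i)·(α̃(i+1) − α̃(i)) = −(1 − ρ)·s(i)².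 -/
/-! The adaptation laws are gradient laws: each weighted error increment `ρ_θ θ̃ Δθ̃` equals minus
the corresponding share of the uncertainty term `T s (β̃ a + α̃) x` in `s Δs = -(1 - ρ) s² + …`,
so the two cancel exactly. -/

theorem weighted_error_mul_sub_of_adaptation_law {θ k : ℝ} (hk : k ≠ 0)
    {θhat θtilde g : ℕ → ℝ} (htilde : ∀ i, θtilde i = θ - θhat i)
    (hhat : ∀ i, θhat (i + 1) = θhat i + g i / k) (i : ℕ) :
    k * θtilde i * (θtilde (i + 1) - θtilde i) = -(θtilde i * g i) := by
  rw [htilde (i + 1), htilde i, hhat]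
  field_simp
  ring

theorem scalar_adaptive_dsmc_lyapunov_identity_general
    (T : ℝ) (a ρ : ℝ)
    (ρβ ρα : ℝ) (hρβ : 0 < ρβ) (hρα : 0 < ρα)
    (β α : ℝ)
    (s x βhat αhat βtilde αtilde : ℕ → ℝ)
    (hβtilde : ∀ i, βtilde i = β - βhat i)
    (hαtilde : ∀ i, αtilde i = α - αhat i)
    (hs : ∀ i, s (i + 1) = ρ * s i + T * (βtilde i * a + αtilde i) * x i)
    (hβhat : ∀ i, βhat (i + 1) = βhat i + T * s i * a * x i / ρβ)
    (hαhat : ∀ i, αhat (i + 1) = αhat i + T * s i * x i / ρα) :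
    ∀ i, s i * (s (i + 1) - s i)
        + ρβ * βtilde i * (βtilde (i + 1) - βtilde i)
        + ρα * αtilde i * (αtilde (i + 1) - αtilde i)
      = -(1 - ρ) * (s i) ^ 2 := by
  intro i
  rw [weighted_error_mul_sub_of_adaptation_law (g := fun j ↦ T * s j * a * x j) hρβ.ne' hβtilde
      hβhat, weighted_error_mul_sub_of_adaptation_law (g := fun j ↦ T * s j * x j) hρα.ne'
      hαtilde hαhat, hs]
  ring

/-- For the scalar uncertain system with sliding dynamics
`s(i+1) = ρ·s(i) + T·(β̃(i)·a + α̃(i))·x(i)` and the adaptation laws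
`β̂(i+1) = β̂(i) + T·s(i)·a·x(i)/ρ_β`, `α̂(i+1) = α̂(i) + T·s(i)·x(i)/ρ_α`,
the exact identity
`s(i)·Δs(i) + ρ_β·β̃(i)·Δβ̃(i) + ρ_α·α̃(i)·Δα̃(i) = −(1 − ρ)·s(i)²` holds. -/
theorem scalar_adaptive_dsmc_lyapunov_identity
    (T : ℝ) (hT : 0 < T) (a ρ : ℝ)
    (ρβ ρα : ℝ) (hρβ : 0 < ρβ) (hρα : 0 < ρα)
    (β α : ℝ)
    (s x βhat αhat βtilde αtilde : ℕ → ℝ)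
    (hβtilde : ∀ i, βtilde i = β - βhat i)
    (hαtilde : ∀ i, αtilde i = α - αhat i)
    (hs : ∀ i, s (i + 1) = ρ * s i + T * (βtilde i * a + αtilde i) * x i)
    (hβhat : ∀ i, βhat (i + 1) = βhat i + T * s i * a * x i / ρβ)
    (hαhat : ∀ i, αhat (i + 1) = αhat i + T * s i * x i / ρα) :
    ∀ i, s i * (s (i + 1) - s i)
        + ρβ * βtilde i * (βtilde (i + 1) - βtilde i)
        + ρα * αtilde i * (αtilde (i + 1) - αtilde i)
      = -(1 - ρ) * (s i) ^ 2 :=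
  scalar_adaptive_dsmc_lyapunov_identity_general T a ρ ρβ ρα hρβ hρα β α s x βhat αhat βtilde αtilde
    hβtilde hαtilde hs hβhat hαhat
end

section
/- Let T > 0, a ∈ ℝ, ρ ∈ ℝ, ρ_β > 0, ρ_α > 0, and β, α ∈ ℝ be unknown constants. Suppose s(i+1) = ρ·s(i) + T·(β̃(i)·a + α̃(i))·x(i) with β̃(i) = β − β̂(i), α̃(i) = α − α̂(i), and the estimates are updated by β̂(i+1) = β̂(i) + T·s(i)·a·x(i)/ρ_β and α̂(i+1) = α̂(i) + T·s(i)·x(i)/ρ_α. Define the Lyapunov function V(i) = (1/2)·s(i)² + (1/2)·ρ_β·β̃(i)² + (1/2)·ρ_α·α̃(i)². Then the exact Lyapunov difference satisfies V(i+1) − V(i) = −(1 − ρ)·s(i)² + (1/2)·(s(i+1) − s(i))² + (1/2)·ρ_β·(β̃(i+1) − β̃(i))² + (1/2)·ρ_α·(α̃(i+1) − α̃(i))². -/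
/-! Expanding each square as `½c(v² − u²) = c·u·(v − u) + ½c·(v − u)²` splits `V(i+1) − V(i)`
into the three squared increments plus the cross terms `s·Δs`, `ρ_β·β̃·Δβ̃` and `ρ_α·α̃·Δα̃`.
The sliding dynamics turn `s·Δs` into `−(1 − ρ)s² + T(β̃a + α̃)x·s`, while the adaptation laws
are chosen so that `ρ_β·Δβ̃ = −T·s·a·x` and `ρ_α·Δα̃ = −T·s·x`: the uncertainty cross terms
cancel exactly. -/

theorem mul_estimationError_succ_sub {K : Type*} [Field K] {θ ρ : K} {θhat e g : ℕ → K}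
    (he : ∀ i, e i = θ - θhat i) (hθ : ∀ i, θhat (i + 1) = θhat i + g i / ρ) (hρ : ρ ≠ 0)
    (i : ℕ) : ρ * (e (i + 1) - e i) = -g i := by
  rw [he, he, hθ]
  field_simp
  ring

theorem scalar_adaptive_dsmc_lyapunov_difference_general
    (T : ℝ) (a ρ : ℝ)
    (ρβ ρα : ℝ) (hρβ : 0 < ρβ) (hρα : 0 < ρα)
    (β α : ℝ)
    (s x βhat αhat βtilde αtilde V : ℕ → ℝ)
    (hβtilde : ∀ i, βtilde i = β - βhat i)
    (hαtilde : ∀ i, αtilde i = α - αhat i)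
    (hs : ∀ i, s (i + 1) = ρ * s i + T * (βtilde i * a + αtilde i) * x i)
    (hβhat : ∀ i, βhat (i + 1) = βhat i + T * s i * a * x i / ρβ)
    (hαhat : ∀ i, αhat (i + 1) = αhat i + T * s i * x i / ρα)
    (hV : ∀ i, V i = (1 / 2) * (s i) ^ 2 + (1 / 2) * ρβ * (βtilde i) ^ 2
      + (1 / 2) * ρα * (αtilde i) ^ 2) :
    ∀ i, V (i + 1) - V i
      = -(1 - ρ) * (s i) ^ 2
        + (1 / 2) * (s (i + 1) - s i) ^ 2
        + (1 / 2) * ρβ * (βtilde (i + 1) - βtilde i) ^ 2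
        + (1 / 2) * ρα * (αtilde (i + 1) - αtilde i) ^ 2 := by
  intro i
  have hβstep : ρβ * (βtilde (i + 1) - βtilde i) = -(T * s i * a * x i) :=
    mul_estimationError_succ_sub (g := fun i => T * s i * a * x i) hβtilde hβhat hρβ.ne' i
  have hαstep : ρα * (αtilde (i + 1) - αtilde i) = -(T * s i * x i) :=
    mul_estimationError_succ_sub (g := fun i => T * s i * x i) hαtilde hαhat hρα.ne' i
  rw [hV, hV]
  linear_combination s i * hs i + βtilde i * hβstep + αtilde i * hαstep

/-- Under the scalar adaptive DSMC dynamics and adaptation laws,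
the Lyapunov function `V(i) = ½s(i)² + ½ρ_β·β̃(i)² + ½ρ_α·α̃(i)²` has the
exact difference
`V(i+1) − V(i) = −(1 − ρ)·s(i)² + ½Δs(i)² + ½ρ_β·Δβ̃(i)² + ½ρ_α·Δα̃(i)²`. -/
theorem scalar_adaptive_dsmc_lyapunov_difference
    (T : ℝ) (hT : 0 < T) (a ρ : ℝ)
    (ρβ ρα : ℝ) (hρβ : 0 < ρβ) (hρα : 0 < ρα)
    (β α : ℝ)
    (s x βhat αhat βtilde αtilde V : ℕ → ℝ)
    (hβtilde : ∀ i, βtilde i = β - βhat i)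
    (hαtilde : ∀ i, αtilde i = α - αhat i)
    (hs : ∀ i, s (i + 1) = ρ * s i + T * (βtilde i * a + αtilde i) * x i)
    (hβhat : ∀ i, βhat (i + 1) = βhat i + T * s i * a * x i / ρβ)
    (hαhat : ∀ i, αhat (i + 1) = αhat i + T * s i * x i / ρα)
    (hV : ∀ i, V i = (1 / 2) * (s i) ^ 2 + (1 / 2) * ρβ * (βtilde i) ^ 2
      + (1 / 2) * ρα * (αtilde i) ^ 2) :
    ∀ i, V (i + 1) - V i
      = -(1 - ρ) * (s i) ^ 2
        + (1 / 2) * (s (i + 1) - s i) ^ 2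
        + (1 / 2) * ρβ * (βtilde (i + 1) - βtilde i) ^ 2
        + (1 / 2) * ρα * (αtilde (i + 1) - αtilde i) ^ 2 :=
  scalar_adaptive_dsmc_lyapunov_difference_general T a ρ ρβ ρα hρβ hρα β α s x βhat αhat βtilde
    αtilde V hβtilde hαtilde hs hβhat hαhat hV
end

section
/- Fix p ∈ {1, …, r}, T > 0, ρ_p ∈ ℝ, nominal parameters a_{p1}, …, a_{pr} ∈ ℝ, unknown constants β_{p1}, …, β_{pr}, α_{p1}, …, α_{pr} ∈ ℝ, and positive adaptation gains ρ_{β_{pq}}, ρ_{α_{pq}} for q = 1, …, r. Suppose the p-th sliding surface satisfies s_p(i+1) = ρ_p·s_p(i) + T·Σ_{q=1}^{r} (β̃_{pq}(i)·a_{pq} + α̃_{pq}(i))·x_q(i), where β̃_{pq}(i) = β_{pq} − β̂_{pq}(i) and α̃_{pq}(i) = α_{pq} − α̂_{pq}(i), and the estimates are updated by β̂_{pq}(i+1) = β̂_{pq}(i) + T·s_p(i)·a_{pq}·x_q(i)/ρ_{β_{pq}} and α̂_{pq}(i+1) = α̂_{pq}(i) + T·s_p(i)·x_q(i)/ρ_{α_{pq}}.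 Then for every i: s_p(i)·(s_p(i+1) − s_p(i)) + Σ_{q=1}^{r} [ρ_{β_{pq}}·β̃_{pq}(i)·(β̃_{pq}(i+1) − β̃_{pq}(i)) + ρ_{α_{pq}}·α̃_{pq}(i)·(α̃_{pq}(i+1) − α̃_{pq}(i))] = −(1 − ρ_p)·s_p(i)². -/
/-! Each adaptation law is a gradient step scaled by `1/ρ`, so the estimator term
`ρ·θ̃(i)·(θ̃(i+1) − θ̃(i))` equals `−T·s_p(i)·θ̃(i)·(regressor)`. Summed over `q`, these cancel
exactly the uncertainty part `s_p(i)·T·Σ_q (β̃ a + α̃) x_q` of `s_p(i)·(s_p(i+1) − s_p(i))`,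
leaving `(ρ_p − 1)·s_p(i)²`. -/

theorem gain_mul_error_mul_sub_of_estimate_update {ρ θ θhat₀ θhat₁ e₀ e₁ c : ℝ} (hρ : ρ ≠ 0)
    (he₀ : e₀ = θ - θhat₀) (he₁ : e₁ = θ - θhat₁) (hupdate : θhat₁ = θhat₀ + c / ρ) :
    ρ * e₀ * (e₁ - e₀) = -(c * e₀) := by
  have hincrement : e₁ - e₀ = -(c / ρ) := by
    rw [he₁, he₀, hupdate]
    ring
  rw [hincrement]
  field_simp

open Finset in
theorem adaptive_dsmc_componentwise_lyapunov_identity_general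
    {r : ℕ} (T : ℝ)
    (ρp : ℝ) (a : Fin r → ℝ)
    (β α : Fin r → ℝ)
    (ρβ ρα : Fin r → ℝ) (hρβ : ∀ q, 0 < ρβ q) (hρα : ∀ q, 0 < ρα q)
    (sp : ℕ → ℝ) (x : Fin r → ℕ → ℝ)
    (βhat αhat βtilde αtilde : Fin r → ℕ → ℝ)
    (hβtilde : ∀ q i, βtilde q i = β q - βhat q i)
    (hαtilde : ∀ q i, αtilde q i = α q - αhat q i)
    (hs : ∀ i, sp (i + 1) = ρp * sp i
      + T * ∑ q, (βtilde q i * a q + αtilde q i) * x q i)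
    (hβhat : ∀ q i, βhat q (i + 1) = βhat q i + T * sp i * a q * x q i / ρβ q)
    (hαhat : ∀ q i, αhat q (i + 1) = αhat q i + T * sp i * x q i / ρα q) :
    ∀ i, sp i * (sp (i + 1) - sp i)
        + ∑ q, (ρβ q * βtilde q i * (βtilde q (i + 1) - βtilde q i)
          + ρα q * αtilde q i * (αtilde q (i + 1) - αtilde q i))
      = -(1 - ρp) * (sp i) ^ 2 := by
  intro i
  have hestimators : ∀ q,
      ρβ q * βtilde q i * (βtilde q (i + 1) - βtilde q i)
        + ρα q * αtilde q i * (αtilde q (i + 1) - αtilde q i)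
      = -(T * sp i * ((βtilde q i * a q + αtilde q i) * x q i)) := by
    intro q
    rw [gain_mul_error_mul_sub_of_estimate_update (hρβ q).ne' (hβtilde q i) (hβtilde q (i + 1))
        (hβhat q i),
      gain_mul_error_mul_sub_of_estimate_update (hρα q).ne' (hαtilde q i) (hαtilde q (i + 1))
        (hαhat q i)]
    ring
  rw [sum_congr rfl fun q _ => hestimators q, sum_neg_distrib, ← mul_sum, hs i]
  ring

open Finset in
/-- For the `p`-th sliding surface of an `r`-th order uncertain
linear system, `s_p(i+1) = ρ_p·s_p(i) + T·Σ_q (β̃_pq(i)·a_pq + α̃_pq(i))·x_q(i)`,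
with adaptation laws `β̂_pq(i+1) = β̂_pq(i) + T·s_p(i)·a_pq·x_q(i)/ρ_{β_pq}` and
`α̂_pq(i+1) = α̂_pq(i) + T·s_p(i)·x_q(i)/ρ_{α_pq}`, the exact identity
`s_p(i)·Δs_p(i) + Σ_q [ρ_{β_pq}·β̃_pq(i)·Δβ̃_pq(i) + ρ_{α_pq}·α̃_pq(i)·Δα̃_pq(i)]
  = −(1 − ρ_p)·s_p(i)²` holds for every `i`. -/
theorem adaptive_dsmc_componentwise_lyapunov_identity
    {r : ℕ} (T : ℝ) (hT : 0 < T)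
    (ρp : ℝ) (a : Fin r → ℝ)
    (β α : Fin r → ℝ)
    (ρβ ρα : Fin r → ℝ) (hρβ : ∀ q, 0 < ρβ q) (hρα : ∀ q, 0 < ρα q)
    (sp : ℕ → ℝ) (x : Fin r → ℕ → ℝ)
    (βhat αhat βtilde αtilde : Fin r → ℕ → ℝ)
    (hβtilde : ∀ q i, βtilde q i = β q - βhat q i)
    (hαtilde : ∀ q i, αtilde q i = α q - αhat q i)
    (hs : ∀ i, sp (i + 1) = ρp * sp i
      + T * ∑ q, (βtilde q i * a q + αtilde q i) * x q i)
    (hβhat : ∀ q i, βhat q (i + 1) = βhat q i + T * sp i * a q * x q i / ρβ q)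
    (hαhat : ∀ q i, αhat q (i + 1) = αhat q i + T * sp i * x q i / ρα q) :
    ∀ i, sp i * (sp (i + 1) - sp i)
        + ∑ q, (ρβ q * βtilde q i * (βtilde q (i + 1) - βtilde q i)
          + ρα q * αtilde q i * (αtilde q (i + 1) - αtilde q i))
      = -(1 - ρp) * (sp i) ^ 2 :=
  adaptive_dsmc_componentwise_lyapunov_identity_general T ρp a β α ρβ ρα hρβ hρα sp x βhat αhat
    βtilde αtilde hβtilde hαtilde hs hβhat hαhat
end

section
/- Let ρ ∈ (0,1), ρ_β > 0, ρ_α > 0, and let s, β̃, α̃ : ℕ → ℝ. Define V(i) = (1/2)·s(i)² + (1/2)·ρ_β·β̃(i)² + (1/2)·ρ_α·α̃(i)², and suppose V(i+1) − V(i) = −(1 − ρ)·s(i)² for all i. Then V is nonincreasing and the sliding surface and parameter estimation errors remain uniformly bounded for all i: s(i)² ≤ 2·V(0), β̃(i)² ≤ 2·V(0)/ρ_β, and α̃(i)² ≤ 2·V(0)/ρ_α; moreover s(i) → 0 as i → ∞. -/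
/-! The difference identity makes `V` nonincreasing, and `V` is a positively weighted sum of
squares, so `V(0)` bounds every weighted square. Being nonincreasing and bounded below, `V`
converges; hence its increments `-(1 - ρ) s(i)²` tend to zero, and so does `s`. -/

open Filter Topology

lemma tendsto_zero_of_tendsto_sq {ι : Type*} {l : Filter ι} {f : ι → ℝ}
    (h : Tendsto (fun i => f i ^ 2) l (𝓝 0)) : Tendsto f l (𝓝 0) := by
  rw [tendsto_zero_iff_abs_tendsto_zero]
  simpa only [Real.sqrt_sq_eq_abs, Real.sqrt_zero, Function.comp_def] using h.sqrt

lemma Antitone.tendsto_succ_sub_zero {V : ℕ → ℝ} (hV : Antitone V)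
    (hbdd : BddBelow (Set.range V)) :
    Tendsto (fun i => V (i + 1) - V i) atTop (𝓝 0) := by
  have hlim := tendsto_atTop_ciInf hV hbdd
  simpa only [sub_self, Function.comp_def] using (hlim.comp (tendsto_add_atTop_nat 1)).sub hlim

lemma tendsto_zero_of_sub_succ_eq_neg_mul_sq {V s : ℕ → ℝ} {c : ℝ} (hc : 0 < c)
    (hbdd : BddBelow (Set.range V)) (h : ∀ i, V (i + 1) - V i = -c * s i ^ 2) :
    Tendsto s atTop (𝓝 0) := by
  have hanti : Antitone V :=
    antitone_nat_of_succ_le fun i => by nlinarith [h i, sq_nonneg (s i)]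
  have hsq : (fun i => s i ^ 2) = fun i => -c⁻¹ * (V (i + 1) - V i) := by
    funext i
    rw [h i]
    field_simp
  apply tendsto_zero_of_tendsto_sq
  rw [hsq]
  simpa only [mul_zero] using (hanti.tendsto_succ_sub_zero hbdd).const_mul (-c⁻¹)

lemma sq_le_of_half_mul_sq_add_le {w x r M : ℝ} (hw : 0 < w) (hr : 0 ≤ r)
    (h : 1 / 2 * w * x ^ 2 + r ≤ M) : x ^ 2 ≤ 2 * M / w := by
  rw [le_div_iff₀ hw]
  linarith

/-- If `V(i) = ½s(i)² + ½ρ_β·β̃(i)² + ½ρ_α·α̃(i)²` satisfies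
`V(i+1) − V(i) = −(1 − ρ)·s(i)²` with `ρ ∈ (0,1)` and `ρ_β, ρ_α > 0`, then `V`
is nonincreasing, the signals remain uniformly bounded
(`s(i)² ≤ 2V(0)`, `β̃(i)² ≤ 2V(0)/ρ_β`, `α̃(i)² ≤ 2V(0)/ρ_α`),
and `s(i) → 0` as `i → ∞`. -/
theorem adaptive_dsmc_boundedness_and_convergence
    (ρ : ℝ) (hρ : 0 < ρ ∧ ρ < 1)
    (ρβ ρα : ℝ) (hρβ : 0 < ρβ) (hρα : 0 < ρα)
    (s βtilde αtilde V : ℕ → ℝ)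
    (hV : ∀ i, V i = (1 / 2) * (s i) ^ 2 + (1 / 2) * ρβ * (βtilde i) ^ 2
      + (1 / 2) * ρα * (αtilde i) ^ 2)
    (hΔV : ∀ i, V (i + 1) - V i = -(1 - ρ) * (s i) ^ 2) :
    (∀ i, V (i + 1) ≤ V i) ∧
    (∀ i, (s i) ^ 2 ≤ 2 * V 0) ∧
    (∀ i, (βtilde i) ^ 2 ≤ 2 * V 0 / ρβ) ∧
    (∀ i, (αtilde i) ^ 2 ≤ 2 * V 0 / ρα) ∧
    Filter.Tendsto s Filter.atTop (nhds 0) := by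
  have hc : 0 < 1 - ρ := sub_pos.mpr hρ.2
  have hmono : ∀ i, V (i + 1) ≤ V i := fun i => by nlinarith [hΔV i, sq_nonneg (s i)]
  have hle : ∀ i, V i ≤ V 0 := fun i => antitone_nat_of_succ_le hmono (Nat.zero_le i)
  have hsq_nonneg : ∀ i, 0 ≤ (s i) ^ 2 ∧ 0 ≤ ρβ * (βtilde i) ^ 2 ∧ 0 ≤ ρα * (αtilde i) ^ 2 :=
    fun i => ⟨by positivity, by positivity, by positivity⟩
  have hV_nonneg : ∀ i, 0 ≤ V i := fun i => by linarith [hV i, hsq_nonneg i]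
  refine ⟨hmono, fun i => ?_, fun i => ?_, fun i => ?_, ?_⟩
  · simpa using sq_le_of_half_mul_sq_add_le one_pos (x := s i)
      (r := 1 / 2 * ρβ * (βtilde i) ^ 2 + 1 / 2 * ρα * (αtilde i) ^ 2)
      (by linarith [hsq_nonneg i]) (by linarith [hV i, hle i])
  · exact sq_le_of_half_mul_sq_add_le hρβ
      (r := 1 / 2 * (s i) ^ 2 + 1 / 2 * ρα * (αtilde i) ^ 2)
      (by linarith [hsq_nonneg i]) (by linarith [hV i, hle i])
  · exact sq_le_of_half_mul_sq_add_le hρα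
      (r := 1 / 2 * (s i) ^ 2 + 1 / 2 * ρβ * (βtilde i) ^ 2)
      (by linarith [hsq_nonneg i]) (by linarith [hV i, hle i])
  · exact tendsto_zero_of_sub_succ_eq_neg_mul_sq hc
      ⟨0, by rintro _ ⟨i, rfl⟩; exact hV_nonneg i⟩ hΔV
end
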